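/- The sun graph S_n (n ≥ 3) has harmonious chromatic number n + 2 if n is even and n + 3 if n is odd. -/
import Mathlib


/-- A coloring `c` is harmonious for `G` if it is a proper vertex coloring and
every unordered pair of colors appears on the endpoints of at most one edge. -/
def IsHarmonious {V α : Type*} (G : SimpleGraph V) (c : V → α) : Prop :=
  (∀ ⦃u v : V⦄, G.Adj u v → c u ≠ c v) ∧
  ∀ e ∈ G.edgeSet, ∀ e' ∈ G.edgeSet, Sym2.map c e = Sym2.map c e' → e = e'

/-- The harmonious chromatic number: the least `k` such that `G` admits a
harmonious coloring with `k` colors. -/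
noncomputable def harmoniousChromaticNumber {V : Type*} [Fintype V] (G : SimpleGraph V) : ℕ :=
  sInf {k | ∃ c : V → Fin k, IsHarmonious G c}


/-- The sun graph `S_n`: a complete graph on the vertices `inl i` together
with outer vertices `inr i`, where `u_i` is adjacent to `v_i` and `v_{i+1}`
(indices mod `n`). -/
def sunGraph (n : ℕ) : SimpleGraph (Fin n ⊕ Fin n) :=
  SimpleGraph.fromRel (fun x y =>
    match x, y with
    | .inl i, .inl j => i ≠ j
    | .inr i, .inl j => j = i ∨ j.val = (i.val + 1) % n
    | _, _ => False)


lemma adj_ll {n : ℕ} (i j : Fin n) : (sunGraph n).Adj (.inl i) (.inl j) ↔ i ≠ j := by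
  simp [sunGraph, SimpleGraph.fromRel_adj]; tauto

lemma adj_rl {n : ℕ} (i j : Fin n) :
    (sunGraph n).Adj (.inr i) (.inl j) ↔ (j = i ∨ j.val = (i.val + 1) % n) := by
  simp [sunGraph, SimpleGraph.fromRel_adj]

lemma not_adj_rr {n : ℕ} (i j : Fin n) : ¬ (sunGraph n).Adj (.inr i) (.inr j) := by
  simp [sunGraph, SimpleGraph.fromRel_adj]


lemma edge_cases {n : ℕ} (e : Sym2 (Fin n ⊕ Fin n)) (he : e ∈ (sunGraph n).edgeSet) :
    (∃ i j : Fin n, i ≠ j ∧ e = s(.inl i, .inl j)) ∨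
    (∃ i j : Fin n, (j = i ∨ j.val = (i.val + 1) % n) ∧ e = s(.inr i, .inl j)) := by
  induction e using Sym2.ind with
  | _ a b =>
    rw [SimpleGraph.mem_edgeSet] at he
    match a, b with
    | .inl i, .inl j => exact Or.inl ⟨i, j, (adj_ll i j).1 he, rfl⟩
    | .inr i, .inl j => exact Or.inr ⟨i, j, (adj_rl i j).1 he, rfl⟩
    | .inl j, .inr i =>
      exact Or.inr ⟨i, j, (adj_rl i j).1 he.symm, Sym2.eq_swap⟩
    | .inr i, .inr j => exact absurd he (not_adj_rr i j)

lemma harm_pairs {V α : Type*} {G : SimpleGraph V} {c : V → α} (h : IsHarmonious G c)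
    {a b a' b' : V} (hab : G.Adj a b) (hab' : G.Adj a' b')
    (hc : s(c a, c b) = s(c a', c b')) : s(a, b) = s(a', b') := by
  exact h.2 _ (SimpleGraph.mem_edgeSet G |>.2 hab) _ (SimpleGraph.mem_edgeSet G |>.2 hab')
    (by simpa using hc)

section lower
variable {n k : ℕ} {c : Fin n ⊕ Fin n → Fin k}

lemma inl_inj (h : IsHarmonious (sunGraph n) c) :
    Function.Injective (fun i : Fin n => c (.inl i)) := by
  intro i j hij
  by_contra hne
  exact h.1 ((adj_ll i j).2 hne) hij

lemma inr_ne_inl (h : IsHarmonious (sunGraph n) c) (i j : Fin n) :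
    c (.inr i) ≠ c (.inl j) := by
  by_cases hadj : j = i ∨ j.val = (i.val + 1) % n
  · exact h.1 ((adj_rl i j).2 hadj)
  · push_neg at hadj
    intro hceq
    have hji : j ≠ i := hadj.1
    have h1 : (sunGraph n).Adj (.inr i) (.inl i) := (adj_rl i i).2 (Or.inl rfl)
    have h2 : (sunGraph n).Adj (.inl j) (.inl i) := (adj_ll j i).2 hji
    have := harm_pairs h h1 h2 (by rw [hceq])
    rw [Sym2.eq_iff] at this
    rcases this with ⟨h3, _⟩ | ⟨h3, _⟩ <;> exact absurd h3 (by simp)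

lemma inr_step (hn : 3 ≤ n) (h : IsHarmonious (sunGraph n) c) (i : Fin n) :
    c (.inr i) ≠ c (.inr ⟨(i.val + 1) % n, Nat.mod_lt _ (by omega)⟩) := by
  set i' : Fin n := ⟨(i.val + 1) % n, Nat.mod_lt _ (by omega)⟩ with hi'
  intro hceq
  have h1 : (sunGraph n).Adj (.inr i) (.inl i') := (adj_rl i i').2 (Or.inr rfl)
  have h2 : (sunGraph n).Adj (.inr i') (.inl i') := (adj_rl i' i').2 (Or.inl rfl)
  have := harm_pairs h h1 h2 (by rw [hceq])
  rw [Sym2.eq_iff] at this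
  have hii' : i ≠ i' := by
    intro he
    have : i.val = (i.val + 1) % n := by conv_lhs => rw [he]
    rcases Nat.lt_or_ge (i.val + 1) n with hlt | hge
    · rw [Nat.mod_eq_of_lt hlt] at this; omega
    · have hv : i.val + 1 = n := by have := i.isLt; omega
      rw [hv, Nat.mod_self] at this; omega
  rcases this with ⟨h3, _⟩ | ⟨h3, _⟩
  · exact hii' (Sum.inr.inj h3)
  · exact absurd h3 (by simp)

lemma lb_even (hn : 3 ≤ n) (h : IsHarmonious (sunGraph n) c) : n + 2 ≤ k := by
  have h0 : (0 : ℕ) < n := by omega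
  have h1 : (1 : ℕ) < n := by omega
  set g : Fin (n + 2) → Fin k := fun m =>
    if hm : m.val < n then c (.inl ⟨m.val, hm⟩)
    else if m.val = n then c (.inr ⟨0, h0⟩) else c (.inr ⟨1, h1⟩) with hg
  have hxy : c (.inr ⟨0, h0⟩) ≠ c (.inr ⟨1, h1⟩) := by
    have := inr_step hn h ⟨0, h0⟩
    simpa [Nat.mod_eq_of_lt h1] using this
  have hginj : Function.Injective g := by
    intro a b hab
    simp only [hg] at hab
    split_ifs at hab with h1a h1b h1b h2a h2b h2b
    · have h3 := inl_inj h hab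
      rw [Fin.mk.injEq] at h3
      exact Fin.ext h3
    · exact absurd hab.symm (inr_ne_inl h _ _)
    · exact absurd hab.symm (inr_ne_inl h _ _)
    · exact absurd hab (inr_ne_inl h _ _)
    · omega
    · exact absurd hab hxy
    · exact absurd hab (inr_ne_inl h _ _)
    · exact absurd hab.symm hxy
    · omega
  have := Fintype.card_le_of_injective g hginj
  simpa using this

lemma lb_odd (hn : 3 ≤ n) (hodd : ¬ Even n) (h : IsHarmonious (sunGraph n) c) :
    n + 3 ≤ k := by
  classical
  by_contra hk
  push_neg at hk
  have hk2 : k = n + 2 := le_antisymm (by omega) (lb_even hn h)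
  subst hk2
  have h0 : (0 : ℕ) < n := by omega
  have h1 : (1 : ℕ) < n := by omega
  set T : Finset (Fin (n + 2)) := Finset.image (fun i : Fin n => c (.inl i)) Finset.univ with hT
  have hcardT : T.card = n := by
    rw [hT, Finset.card_image_of_injective _ (inl_inj h)]; simp
  set x := c (.inr ⟨0, h0⟩) with hx
  set y := c (.inr ⟨1, h1⟩) with hy
  have hxy : x ≠ y := by
    have := inr_step hn h ⟨0, h0⟩
    simpa [hx, hy, Nat.mod_eq_of_lt h1] using this
  have hrT : ∀ i : Fin n, c (.inr i) ∉ T := by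
    intro i hmem
    rw [hT, Finset.mem_image] at hmem
    obtain ⟨a, _, ha⟩ := hmem
    exact inr_ne_inl h i a ha.symm
  have hmem : ∀ i : Fin n, c (.inr i) = x ∨ c (.inr i) = y := by
    intro i
    by_contra hz
    push_neg at hz
    have hcard : (insert (c (.inr i)) (insert x (insert y T))).card = n + 3 := by
      have e1 : c (.inr i) ∉ insert x (insert y T) := by
        simp only [Finset.mem_insert]
        push_neg
        exact ⟨hz.1, hz.2, hrT i⟩
      have e2 : x ∉ insert y T := by
        simp only [Finset.mem_insert]
        push_neg
        exact ⟨hxy, hrT ⟨0, h0⟩⟩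
      rw [Finset.card_insert_of_notMem e1, Finset.card_insert_of_notMem e2,
        Finset.card_insert_of_notMem (hrT ⟨1, h1⟩), hcardT]
    have hle := Finset.card_le_univ (insert (c (.inr i)) (insert x (insert y T)))
    rw [hcard] at hle
    simp only [Finset.card_univ, Fintype.card_fin] at hle
    omega
  set F : ℕ → Fin (n + 2) := fun m => c (.inr ⟨m % n, Nat.mod_lt _ h0⟩) with hF
  have hstep : ∀ m : ℕ, F m ≠ F (m + 1) := by
    intro m
    have e : (⟨(m % n + 1) % n, Nat.mod_lt _ h0⟩ : Fin n)
        = ⟨(m + 1) % n, Nat.mod_lt _ h0⟩ := Fin.ext (Nat.mod_add_mod m n 1)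
    have := inr_step hn h ⟨m % n, Nat.mod_lt _ h0⟩
    rw [e] at this
    exact this
  have hpar : ∀ m : ℕ, (F m = x ↔ (Even m ↔ F 0 = x)) := by
    intro m
    induction m with
    | zero => simp
    | succ m ih =>
      have h2 : F (m + 1) = x ↔ ¬ (F m = x) := by
        rcases hmem ⟨m % n, Nat.mod_lt _ h0⟩ with hm | hm <;>
          rcases hmem ⟨(m + 1) % n, Nat.mod_lt _ h0⟩ with hm1 | hm1 <;>
          simp only [hF] at * <;> rw [hm, hm1] <;>
          first
          | (exact absurd (hm.trans hm1.symm) (hstep m))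
          | simp [hxy, hxy.symm]
      rw [h2, ih, Nat.even_add_one]
      tauto
  have hFn : F n = F 0 := by
    have e : (⟨n % n, Nat.mod_lt _ h0⟩ : Fin n) = ⟨0 % n, Nat.mod_lt _ h0⟩ :=
      Fin.ext (by simp)
    simp only [hF]
    rw [e]
  have := hpar n
  rw [hFn] at this
  have h00 := hpar 0
  simp at h00
  tauto

end lower


def evenCol (n : ℕ) : Fin n ⊕ Fin n → Fin (n + 2)
  | .inl i => ⟨i.val, by have := i.isLt; omega⟩
  | .inr i => if i.val % 2 = 0 then ⟨n, by omega⟩ else ⟨n + 1, by omega⟩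

lemma mod_succ_cases {n : ℕ} (i : ℕ) (hi : i < n) :
    ((i + 1) % n = i + 1 ∧ i + 1 < n) ∨ ((i + 1) % n = 0 ∧ i + 1 = n) := by
  rcases Nat.lt_or_ge (i + 1) n with hlt | hge
  · exact Or.inl ⟨Nat.mod_eq_of_lt hlt, hlt⟩
  · have h1 : i + 1 = n := by omega
    exact Or.inr ⟨by simp [h1], h1⟩

lemma harm_even {n : ℕ} (hn : 3 ≤ n) (he : Even n) :
    ∃ c : Fin n ⊕ Fin n → Fin (n + 2), IsHarmonious (sunGraph n) c := by
  obtain ⟨t, ht⟩ := he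
  refine ⟨evenCol n, ?_, ?_⟩
  · rintro (i | i) (j | j) huv hc
    · rw [adj_ll] at huv
      simp only [evenCol, Fin.mk.injEq] at hc
      exact huv (Fin.ext hc)
    · have hi := i.isLt
      simp only [evenCol] at hc
      split_ifs at hc <;> simp only [Fin.mk.injEq] at hc <;> omega
    · have hj := j.isLt
      simp only [evenCol] at hc
      split_ifs at hc <;> simp only [Fin.mk.injEq] at hc <;> omega
    · exact not_adj_rr i j huv
  · intro e he1 e' he2 hmap
    rcases edge_cases e he1 with ⟨i, j, hij, rfl⟩ | ⟨i, j, hij, rfl⟩ <;>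
      rcases edge_cases e' he2 with ⟨i', j', hij', rfl⟩ | ⟨i', j', hij', rfl⟩ <;>
      simp only [Sym2.map_pair_eq, evenCol] at hmap
    · -- clique / clique
      rw [Sym2.eq_iff] at hmap ⊢
      simp only [Fin.mk.injEq] at hmap
      simp only [Sum.inl.injEq]
      rcases hmap with ⟨ha, hb⟩ | ⟨ha, hb⟩
      · exact Or.inl ⟨Fin.ext ha, Fin.ext hb⟩
      · exact Or.inr ⟨Fin.ext ha, Fin.ext hb⟩
    · -- clique / spoke : impossible
      have hi := i.isLt; have hj := j.isLt
      rw [Sym2.eq_iff] at hmap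
      split_ifs at hmap <;> simp only [Fin.mk.injEq] at hmap <;>
        rcases hmap with ⟨ha, hb⟩ | ⟨ha, hb⟩ <;> omega
    · -- spoke / clique : impossible
      have hi := i'.isLt; have hj := j'.isLt
      rw [Sym2.eq_iff] at hmap
      split_ifs at hmap <;> simp only [Fin.mk.injEq] at hmap <;>
        rcases hmap with ⟨ha, hb⟩ | ⟨ha, hb⟩ <;> omega
    · -- spoke / spoke
      have hi := i.isLt; have hi' := i'.isLt
      have hjlt := j.isLt; have hjlt' := j'.isLt
      have hjv : j.val = i.val ∨ j.val = (i.val + 1) % n := by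
        rcases hij with h1 | h1
        · exact Or.inl (congrArg Fin.val h1)
        · exact Or.inr h1
      have hjv' : j'.val = i'.val ∨ j'.val = (i'.val + 1) % n := by
        rcases hij' with h1 | h1
        · exact Or.inl (congrArg Fin.val h1)
        · exact Or.inr h1
      have m1 := mod_succ_cases i.val hi
      have m2 := mod_succ_cases i'.val hi'
      have key : j.val = j'.val ∧ i.val % 2 = i'.val % 2 := by
        rw [Sym2.eq_iff] at hmap
        split_ifs at hmap with hp hq hq <;> simp only [Fin.mk.injEq] at hmap <;>
          rcases hmap with ⟨ha, hb⟩ | ⟨ha, hb⟩ <;> omega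
      have hii : i = i' := by
        apply Fin.ext
        rcases hjv with h1 | h1 <;> rcases hjv' with h2 | h2 <;>
          rcases m1 with ⟨ma, mb⟩ | ⟨ma, mb⟩ <;> rcases m2 with ⟨mc, md⟩ | ⟨mc, md⟩ <;>
          omega
      have hjj : j = j' := Fin.ext key.1
      rw [hii, hjj]


def oddCol (n : ℕ) : Fin n ⊕ Fin n → Fin (n + 3)
  | .inl i => ⟨i.val, by have := i.isLt; omega⟩
  | .inr i =>
    if i.val = n - 1 then ⟨n + 2, by omega⟩
    else if i.val % 2 = 0 then ⟨n, by omega⟩ else ⟨n + 1, by omega⟩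

lemma harm_odd {n : ℕ} (hn : 3 ≤ n) :
    ∃ c : Fin n ⊕ Fin n → Fin (n + 3), IsHarmonious (sunGraph n) c := by
  refine ⟨oddCol n, ?_, ?_⟩
  · rintro (i | i) (j | j) huv hc
    · rw [adj_ll] at huv
      simp only [oddCol, Fin.mk.injEq] at hc
      exact huv (Fin.ext hc)
    · have hi := i.isLt
      simp only [oddCol] at hc
      split_ifs at hc <;> simp only [Fin.mk.injEq] at hc <;> omega
    · have hj := j.isLt
      simp only [oddCol] at hc
      split_ifs at hc <;> simp only [Fin.mk.injEq] at hc <;> omega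
    · exact not_adj_rr i j huv
  · intro e he1 e' he2 hmap
    rcases edge_cases e he1 with ⟨i, j, hij, rfl⟩ | ⟨i, j, hij, rfl⟩ <;>
      rcases edge_cases e' he2 with ⟨i', j', hij', rfl⟩ | ⟨i', j', hij', rfl⟩ <;>
      simp only [Sym2.map_pair_eq, oddCol] at hmap
    · rw [Sym2.eq_iff] at hmap ⊢
      simp only [Fin.mk.injEq] at hmap
      simp only [Sum.inl.injEq]
      rcases hmap with ⟨ha, hb⟩ | ⟨ha, hb⟩
      · exact Or.inl ⟨Fin.ext ha, Fin.ext hb⟩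
      · exact Or.inr ⟨Fin.ext ha, Fin.ext hb⟩
    · have hi := i.isLt; have hj := j.isLt
      rw [Sym2.eq_iff] at hmap
      split_ifs at hmap <;> simp only [Fin.mk.injEq] at hmap <;>
        rcases hmap with ⟨ha, hb⟩ | ⟨ha, hb⟩ <;> omega
    · have hi := i'.isLt; have hj := j'.isLt
      rw [Sym2.eq_iff] at hmap
      split_ifs at hmap <;> simp only [Fin.mk.injEq] at hmap <;>
        rcases hmap with ⟨ha, hb⟩ | ⟨ha, hb⟩ <;> omega
    · have hi := i.isLt; have hi' := i'.isLt
      have hjlt := j.isLt; have hjlt' := j'.isLt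
      have hjv : j.val = i.val ∨ j.val = (i.val + 1) % n := by
        rcases hij with h1 | h1
        · exact Or.inl (congrArg Fin.val h1)
        · exact Or.inr h1
      have hjv' : j'.val = i'.val ∨ j'.val = (i'.val + 1) % n := by
        rcases hij' with h1 | h1
        · exact Or.inl (congrArg Fin.val h1)
        · exact Or.inr h1
      have m1 := mod_succ_cases i.val hi
      have m2 := mod_succ_cases i'.val hi'
      have key : j.val = j'.val ∧
          ((i.val = n - 1 ∧ i'.val = n - 1) ∨
            (i.val ≠ n - 1 ∧ i'.val ≠ n - 1 ∧ i.val % 2 = i'.val % 2)) := by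
        rw [Sym2.eq_iff] at hmap
        split_ifs at hmap <;> simp only [Fin.mk.injEq] at hmap <;>
          rcases hmap with ⟨ha, hb⟩ | ⟨ha, hb⟩ <;> omega
      have hii : i = i' := by
        apply Fin.ext
        obtain ⟨hk1, hk2⟩ := key
        rcases hjv with h1 | h1 <;> rcases hjv' with h2 | h2 <;>
          rcases m1 with ⟨ma, mb⟩ | ⟨ma, mb⟩ <;> rcases m2 with ⟨mc, md⟩ | ⟨mc, md⟩ <;>
          rcases hk2 with ⟨p1, p2⟩ | ⟨p1, p2, p3⟩ <;> omega
      have hjj : j = j' := Fin.ext key.1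
      rw [hii, hjj]

theorem harmonious_sunGraph (n : ℕ) (hn : 3 ≤ n) :
    harmoniousChromaticNumber (sunGraph n) = if Even n then n + 2 else n + 3 := by
  unfold harmoniousChromaticNumber
  split_ifs with he
  · apply le_antisymm
    · exact Nat.sInf_le (harm_even hn he)
    · refine le_csInf ⟨n + 2, harm_even hn he⟩ ?_
      rintro k ⟨c, hc⟩
      exact lb_even hn hc
  · apply le_antisymm
    · exact Nat.sInf_le (harm_odd hn)
    · refine le_csInf ⟨n + 3, harm_odd hn⟩ ?_
      rintro k ⟨c, hc⟩
      exact lb_odd hn he hc
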